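/- arXiv:2009.04874 — 9 statements merged into one kernel-verified Lean document; each statement's English description precedes it below -/
import Mathlib

section
/- Let E ⊆ ℝⁿ be a set invariant under all permutations of coordinates, and let a ∈ E. Then every element d of the normal cone N_E(a) satisfies ⟨a, d⟩ = ⟨a↓, d↓⟩ (i.e., a and d are 'strongly commuting': simultaneously rearrangeable to decreasing order by a common permutation of coordinates in the sense of achieving the rearrangement-inequality equality). -/
open Finset

/-- Decreasing rearrangement of a vector in ℝⁿ. -/
noncomputable def dsort {n : ℕ} (v : Fin n → ℝ) : Fin n → ℝ :=
  fun i => - ((fun j => - v j) ∘ Tuple.sort (fun j => - v j)) i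

lemma dsort_antitone {n : ℕ} (v : Fin n → ℝ) : Antitone (dsort v) := by
  have h := Tuple.monotone_sort (fun j => - v j)
  intro i j hij
  simp only [dsort]
  exact neg_le_neg (h hij)

theorem stmt2 {n : ℕ} (E : Set (Fin n → ℝ)) (hE : E.Nonempty)
    (hinv : ∀ x ∈ E, ∀ σ : Equiv.Perm (Fin n), (fun i => x (σ i)) ∈ E)
    (a : Fin n → ℝ) (ha : a ∈ E) (d : Fin n → ℝ)
    (hd : ∀ x ∈ E, ∑ i, d i * (x i - a i) ≤ 0) :
    ∑ i, a i * d i = ∑ i, dsort a i * dsort d i := by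
  set σa := Tuple.sort (fun j => - a j) with hσa
  set σd := Tuple.sort (fun j => - d j) with hσd
  have hda : ∀ i, dsort a i = a (σa i) := fun i => by simp [dsort, hσa]
  have hdd : ∀ i, dsort d i = d (σd i) := fun i => by simp [dsort, hσd]
  have hmono : Monovary (dsort a) (dsort d) := by
    intro i j hij
    rcases lt_trichotomy i j with h | h | h
    · exact absurd (dsort_antitone d h.le) (not_le.mpr hij)
    · exact (h ▸ le_refl _)
    · exact dsort_antitone a h.le
  apply le_antisymm
  · -- ∑ a d = ∑ dsort a i * dsort d (τ i) ≤ ∑ dsort a * dsort d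
    set τ : Equiv.Perm (Fin n) := σa.trans σd.symm with hτ
    have h1 : ∑ i, a i * d i = ∑ i, dsort a i * dsort d (τ i) := by
      rw [← Equiv.sum_comp σa (fun i => a i * d i)]
      refine Finset.sum_congr rfl fun i _ => ?_
      simp [hda, hdd, hτ]
    rw [h1]
    exact hmono.sum_mul_comp_perm_le_sum_mul
  · -- ∑ dsort a * dsort d = ∑ a j * d (π j) ≤ ∑ a d via hd
    set π : Equiv.Perm (Fin n) := σa.symm.trans σd with hπ
    have h2 : ∑ i, dsort a i * dsort d i = ∑ i, a (π.symm i) * d i := by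
      rw [← Equiv.sum_comp σd (fun i => a (π.symm i) * d i)]
      refine Finset.sum_congr rfl fun i _ => ?_
      simp [hda, hdd, hπ]
    rw [h2]
    have hx : (fun i => a (π.symm i)) ∈ E := hinv a ha π.symm
    have := hd _ hx
    have h3 : ∑ i, d i * (a (π.symm i) - a i) =
        ∑ i, a (π.symm i) * d i - ∑ i, a i * d i := by
      rw [← Finset.sum_sub_distrib]
      exact Finset.sum_congr rfl fun i _ => by ring
    linarith [h3 ▸ this]
end

section
/- Let a ∈ ℝⁿ and let [a] := {σ·a : σ a permutation} be its permutation orbit. Then every d in the normal cone N_{[a]}(a) satisfies ⟨a, d⟩ = ⟨a↓, d↓⟩. -/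
open Finset

theorem stmt3 {n : ℕ} (a d : Fin n → ℝ)
    (hd : ∀ x ∈ {x : Fin n → ℝ | ∃ σ : Equiv.Perm (Fin n), x = fun i => a (σ i)},
      ∑ i, d i * (x i - a i) ≤ 0) :
    ∑ i, a i * d i = ∑ i, dsort a i * dsort d i := by
  set σa := Tuple.sort (fun j => - a j) with hσa
  set σd := Tuple.sort (fun j => - d j) with hσd
  have hda : ∀ i, dsort a i = a (σa i) := fun i => by simp [dsort, hσa]
  have hdd : ∀ i, dsort d i = d (σd i) := fun i => by simp [dsort, hσd]
  have hAa : Antitone (dsort a) := by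
    have := Tuple.monotone_sort (fun j => - a j)
    intro i j hij
    have := this hij
    simp only [Function.comp] at this
    simp only [dsort, Function.comp]
    linarith
  have hAd : Antitone (dsort d) := by
    have := Tuple.monotone_sort (fun j => - d j)
    intro i j hij
    have := this hij
    simp only [Function.comp] at this
    simp only [dsort, Function.comp]
    linarith
  have hmono : Monovary (dsort a) (dsort d) := hAa.monovary hAd
  -- RHS rewritten: ∑ i, a (σa (σd⁻¹ i)) * d i
  have hRHS : ∑ i, dsort a i * dsort d i = ∑ i, d i * a ((σa * σd⁻¹) i) := by
    rw [← Equiv.sum_comp σd (fun i => d i * a ((σa * σd⁻¹) i))]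
    refine Finset.sum_congr rfl fun i _ => ?_
    simp [hda, hdd, mul_comm]
  -- lower bound: ⟨a↓,d↓⟩ ≤ ⟨a,d⟩
  have h1 : ∑ i, dsort a i * dsort d i ≤ ∑ i, a i * d i := by
    have := hd (fun i => a ((σa * σd⁻¹) i)) ⟨σa * σd⁻¹, rfl⟩
    rw [hRHS]
    have h2 : ∑ i, d i * (a ((σa * σd⁻¹) i) - a i)
        = ∑ i, d i * a ((σa * σd⁻¹) i) - ∑ i, d i * a i := by
      rw [← Finset.sum_sub_distrib]; congr 1; ext i; ring
    rw [h2] at this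
    have h3 : ∑ i, d i * a i = ∑ i, a i * d i := by
      congr 1; ext i; ring
    linarith
  -- upper bound: ⟨a,d⟩ ≤ ⟨a↓,d↓⟩
  have h4 : ∑ i, a i * d i ≤ ∑ i, dsort a i * dsort d i := by
    have key : ∑ i, a i * d i = ∑ i, dsort a i * dsort d ((σd⁻¹ * σa) i) := by
      rw [← Equiv.sum_comp σa (fun i => a i * d i)]
      refine Finset.sum_congr rfl fun i _ => ?_
      simp [hda, hdd]
    rw [key]
    exact hmono.sum_mul_comp_perm_le_sum_mul
  linarith
end

section
/- Let E ⊆ ℝⁿ be a nonempty, closed, convex, permutation-invariant set and let h : ℝⁿ → ℝ be convex. If a minimizes h over E, then there exists c ∈ ∂h(a) (a subgradient of h at a over all of ℝⁿ) such that ⟨a, −c⟩ = ⟨a↓, (−c)↓⟩. -/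
/-!
The minimality of `a` over the convex set `E` is expressed by separating the strict epigraph of
`h` from `E × (-∞, h a]`; the separating functional, normalised along the `ℝ`-axis, is a subgradient
`c` of `h` at `a` with `⟨-c, x - a⟩ ≤ 0` on `E`. Since `E` is permutation invariant, this applies to
every rearrangement `x` of `a`, so `⟨a, -c⟩` is the largest value of `⟨x, -c⟩` over rearrangements,
and by the rearrangement inequality that largest value is `⟨a↓, (-c)↓⟩`.
-/

open Finset

open Filter Topology

section Subgradient

variable {V : Type*} [TopologicalSpace V] [AddCommGroup V] [IsTopologicalAddGroup V]
  [Module ℝ V] [ContinuousSMul ℝ V]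

theorem ConvexOn.exists_subgradient_nonneg_on_of_isMinOn {h : V → ℝ}
    (hconv : ConvexOn ℝ Set.univ h) (hcont : Continuous h) {s : Set V} (hs : Convex ℝ s)
    {a : V} (ha : a ∈ s) (hmin : IsMinOn h s a) :
    ∃ φ : StrongDual ℝ V, (∀ x, h a + φ (x - a) ≤ h x) ∧ ∀ x ∈ s, 0 ≤ φ (x - a) := by
  set A : Set (V × ℝ) := {p | p.1 ∈ Set.univ ∧ h p.1 < p.2}
  have hAopen : IsOpen A := by
    simpa [A] using isOpen_lt (hcont.comp continuous_fst) continuous_snd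
  have hdisj : Disjoint A (s ×ˢ Set.Iic (h a)) := by
    refine Set.disjoint_left.2 fun p ⟨_, hp⟩ ⟨hps, hpa⟩ => ?_
    exact (hp.trans_le hpa).not_ge (hmin hps)
  obtain ⟨f, u, hfA, hfB⟩ := geometric_hahn_banach_open hconv.convex_strict_epigraph hAopen
    (hs.prod (convex_Iic _)) hdisj
  set g : StrongDual ℝ V := f.comp (ContinuousLinearMap.inl ℝ V ℝ)
  set β : ℝ := f (0, 1)
  have hf : ∀ x t, f (x, t) = g x + t * β := fun x t => by
    have : ((x, t) : V × ℝ) = (x, 0) + t • (0, 1) := by simp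
    rw [this, map_add, map_smul, smul_eq_mul]
    rfl
  have hA : ∀ x t, h x < t → g x + t * β < u := fun x t hxt => hf x t ▸ hfA (x, t) ⟨trivial, hxt⟩
  have hB : ∀ x ∈ s, u ≤ g x + h a * β := fun x hx =>
    hf x _ ▸ hfB (x, h a) ⟨hx, Set.mem_Iic.2 le_rfl⟩
  have hβ : β < 0 := by
    linarith [hA a (h a + 1) (lt_add_one _), hB a ha]
  -- let `t ↓ h x` in `hA`
  have hgraph : ∀ x, g x + h x * β ≤ u := fun x => by
    have hlim : Tendsto (fun t => g x + t * β) (𝓝[>] (h x)) (𝓝 (g x + h x * β)) :=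
      (Continuous.tendsto (by fun_prop) _).mono_left nhdsWithin_le_nhds
    exact le_of_tendsto hlim (eventually_nhdsWithin_of_forall fun t ht => (hA x t ht).le)
  have hφ : ∀ x, ((-β)⁻¹ • g) (x - a) = (-β)⁻¹ * (g x - g a) := fun x => by simp
  refine ⟨(-β)⁻¹ • g, fun x => ?_, fun x hx => ?_⟩
  · have : (-β)⁻¹ * (g x - g a) ≤ h x - h a := by
      rw [inv_mul_le_iff₀ (neg_pos.2 hβ)]
      linarith [hgraph x, hB a ha]
    linarith [hφ x]
  · rw [hφ]
    exact mul_nonneg (inv_nonneg.2 (neg_nonneg.2 hβ.le)) (by linarith [hgraph a, hB x hx])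

end Subgradient

section Rearrangement

variable {n : ℕ}

lemma dsort_apply (v : Fin n → ℝ) (i : Fin n) :
    dsort v i = v (Tuple.sort (fun j => -v j) i) := by
  simp [dsort]

lemma antitone_dsort (v : Fin n → ℝ) : Antitone (dsort v) := fun i j hij => by
  have := Tuple.monotone_sort (fun j => -v j) hij
  simp only [Function.comp_apply] at this
  simp only [dsort_apply]
  linarith

lemma sum_mul_le_sum_dsort_mul_dsort (a b : Fin n → ℝ) :
    ∑ i, a i * b i ≤ ∑ i, dsort a i * dsort b i := by
  set σ := Tuple.sort (fun j => -a j)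
  set τ := Tuple.sort (fun j => -b j)
  calc ∑ i, a i * b i = ∑ i, a (σ i) * b (σ i) := (Equiv.sum_comp σ (fun i => a i * b i)).symm
    _ = ∑ i, dsort a i * dsort b ((σ.trans τ.symm) i) := by simp [dsort_apply, σ, τ]
    _ ≤ ∑ i, dsort a i * dsort b i :=
      ((antitone_dsort a).monovary (antitone_dsort b)).sum_mul_comp_perm_le_sum_mul

lemma exists_perm_sum_dsort_mul_dsort_eq (a b : Fin n → ℝ) :
    ∃ ρ : Equiv.Perm (Fin n), ∑ i, dsort a i * dsort b i = ∑ i, a (ρ i) * b i := by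
  set σ := Tuple.sort (fun j => -a j)
  set τ := Tuple.sort (fun j => -b j)
  refine ⟨τ.symm.trans σ, ?_⟩
  rw [← Equiv.sum_comp τ (fun i => a ((τ.symm.trans σ) i) * b i)]
  simp [dsort_apply, σ, τ]

lemma sum_mul_eq_sum_dsort_mul_dsort_of_forall_perm {a b : Fin n → ℝ}
    (hmax : ∀ ρ : Equiv.Perm (Fin n), ∑ i, a (ρ i) * b i ≤ ∑ i, a i * b i) :
    ∑ i, a i * b i = ∑ i, dsort a i * dsort b i := by
  obtain ⟨ρ, hρ⟩ := exists_perm_sum_dsort_mul_dsort_eq a b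
  exact (sum_mul_le_sum_dsort_mul_dsort a b).antisymm (hρ ▸ hmax ρ)

end Rearrangement

theorem stmt5_general {n : ℕ} (E : Set (Fin n → ℝ))
    (hEconv : Convex ℝ E)
    (hinv : ∀ x ∈ E, ∀ σ : Equiv.Perm (Fin n), (fun i => x (σ i)) ∈ E)
    (h : (Fin n → ℝ) → ℝ) (hconv : ConvexOn ℝ Set.univ h)
    (a : Fin n → ℝ) (ha : a ∈ E)
    (hmin : ∀ x ∈ E, h a ≤ h x) :
    ∃ c : Fin n → ℝ,
      (∀ x : Fin n → ℝ, h x - h a ≥ ∑ i, c i * (x i - a i)) ∧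
      ∑ i, a i * (- c i) = ∑ i, dsort a i * dsort (fun j => - c j) i := by
  have hcont : Continuous h := continuousOn_univ.1 (hconv.continuousOn isOpen_univ)
  obtain ⟨φ, hsub, hnormal⟩ :=
    hconv.exists_subgradient_nonneg_on_of_isMinOn hcont hEconv ha (isMinOn_iff.2 hmin)
  set c : Fin n → ℝ := fun i => φ (Pi.single i 1)
  have hφ : ∀ x y, φ (x - y) = ∑ i, c i * (x i - y i) := fun x y => by
    conv_lhs => rw [← univ_sum_single (x - y)]
    refine (map_sum φ _ _).trans (sum_congr rfl fun i _ => ?_)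
    rw [mul_comm, ← smul_eq_mul, ← map_smul, ← Pi.single_smul', smul_eq_mul, mul_one, Pi.sub_apply]
  refine ⟨c, fun x => by linarith [hsub x, hφ x a], ?_⟩
  refine sum_mul_eq_sum_dsort_mul_dsort_of_forall_perm fun ρ => ?_
  have := hφ (fun i => a (ρ i)) a ▸ hnormal _ (hinv a ha ρ)
  simp only [mul_sub, sum_sub_distrib, sub_nonneg] at this
  simpa only [mul_neg, neg_mul, sum_neg_distrib, neg_le_neg_iff, mul_comm (a _)] using this

theorem stmt5 {n : ℕ} (E : Set (Fin n → ℝ)) (hE : E.Nonempty)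
    (hEclosed : IsClosed E) (hEconv : Convex ℝ E)
    (hinv : ∀ x ∈ E, ∀ σ : Equiv.Perm (Fin n), (fun i => x (σ i)) ∈ E)
    (h : (Fin n → ℝ) → ℝ) (hconv : ConvexOn ℝ Set.univ h)
    (a : Fin n → ℝ) (ha : a ∈ E)
    (hmin : ∀ x ∈ E, h a ≤ h x) :
    ∃ c : Fin n → ℝ,
      (∀ x : Fin n → ℝ, h x - h a ≥ ∑ i, c i * (x i - a i)) ∧
      ∑ i, a i * (- c i) = ∑ i, dsort a i * dsort (fun j => - c j) i :=
  stmt5_general E hEconv hinv h hconv a ha hmin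
end

section
/- Let E ⊆ ℝⁿ be permutation invariant, φ : ℝⁿ → ℝ permutation invariant, and c ∈ ℝⁿ. If a maximizes x ↦ ⟨c, x⟩ + φ(x) over E, then ⟨c, a⟩ = ⟨c↓, a↓⟩, and the maximum value equals ⟨c↓, a↓⟩ + φ(a). -/
open Finset

lemma dsort_eq {n : ℕ} (v : Fin n → ℝ) (i : Fin n) :
    dsort v i = v (Tuple.sort (fun j => - v j) i) := by
  simp [dsort]

theorem stmt6 {n : ℕ} (E : Set (Fin n → ℝ)) (hE : E.Nonempty)
    (hinv : ∀ x ∈ E, ∀ σ : Equiv.Perm (Fin n), (fun i => x (σ i)) ∈ E)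
    (φ : (Fin n → ℝ) → ℝ)
    (hφ : ∀ x, ∀ σ : Equiv.Perm (Fin n), φ (fun i => x (σ i)) = φ x)
    (c : Fin n → ℝ) (a : Fin n → ℝ) (ha : a ∈ E)
    (hmax : ∀ x ∈ E, (∑ i, c i * x i) + φ x ≤ (∑ i, c i * a i) + φ a) :
    (∑ i, c i * a i = ∑ i, dsort c i * dsort a i) ∧
    (∑ i, c i * a i) + φ a = (∑ i, dsort c i * dsort a i) + φ a := by
  set σc : Equiv.Perm (Fin n) := Tuple.sort (fun j => - c j) with hσc
  set σa : Equiv.Perm (Fin n) := Tuple.sort (fun j => - a j) with hσa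
  have key : ∑ i, c i * a i = ∑ i, dsort c i * dsort a i := by
    have hmono : Monovary (dsort c) (dsort a) :=
      (dsort_antitone c).monovary (dsort_antitone a)
    -- upper bound: ∑ c a ≤ ∑ dsort c dsort a
    have h1 : ∑ i, c i * a i ≤ ∑ i, dsort c i * dsort a i := by
      have : ∑ i, c i * a i = ∑ i, dsort c i * dsort a ((σa.symm * σc) i) := by
        rw [← Equiv.sum_comp σc (fun j => c j * a j)]
        refine Finset.sum_congr rfl fun i _ => ?_
        simp [dsort_eq, ← hσc, ← hσa, Equiv.Perm.mul_apply]
      rw [this]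
      exact hmono.sum_mul_comp_perm_le_sum_mul
    -- lower bound
    have h2 : ∑ i, dsort c i * dsort a i ≤ ∑ i, c i * a i := by
      set τ : Equiv.Perm (Fin n) := σa * σc.symm with hτ
      have hx : (fun i => a (τ i)) ∈ E := hinv a ha τ
      have hm := hmax _ hx
      rw [hφ a τ] at hm
      have hle : ∑ i, c i * a (τ i) ≤ ∑ i, c i * a i := by linarith
      calc ∑ i, dsort c i * dsort a i = ∑ i, c i * a (τ i) := by
            rw [← Equiv.sum_comp σc (fun j => c j * a (τ j))]
            refine Finset.sum_congr rfl fun i _ => ?_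
            simp [dsort_eq, ← hσc, ← hσa, hτ, Equiv.Perm.mul_apply]
        _ ≤ ∑ i, c i * a i := hle
    linarith
  exact ⟨key, by rw [key]⟩
end

section
/- Let E ⊆ ℝⁿ be permutation invariant and G : ℝⁿ → ℝⁿ. If a ∈ E solves the variational inequality ⟨G(a), x − a⟩ ≥ 0 for all x ∈ E, then ⟨a, −G(a)⟩ = ⟨a↓, (−G(a))↓⟩. -/
open Finset

lemma dsort_eq_comp {n : ℕ} (v : Fin n → ℝ) :
    dsort v = v ∘ Tuple.sort (fun j => - v j) := by
  funext i
  simp [dsort]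

theorem stmt7 {n : ℕ} (E : Set (Fin n → ℝ)) (hE : E.Nonempty)
    (hinv : ∀ x ∈ E, ∀ σ : Equiv.Perm (Fin n), (fun i => x (σ i)) ∈ E)
    (G : (Fin n → ℝ) → (Fin n → ℝ))
    (a : Fin n → ℝ) (ha : a ∈ E)
    (hVI : ∀ x ∈ E, 0 ≤ ∑ i, G a i * (x i - a i)) :
    ∑ i, a i * (- G a i) = ∑ i, dsort a i * dsort (fun j => - G a j) i := by
  set b : Fin n → ℝ := fun j => - G a j with hb
  set σa := Tuple.sort (fun j => - a j)
  set σb := Tuple.sort (fun j => - b j)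
  have hda : dsort a = a ∘ σa := dsort_eq_comp a
  have hdb : dsort b = b ∘ σb := dsort_eq_comp b
  -- direction ≥ : use VI at x = a ∘ (σa * σb⁻¹-ish)
  have hx : (fun i => a ((σa * σb⁻¹ : Equiv.Perm (Fin n)) i)) ∈ E := hinv a ha _
  have h1 := hVI _ hx
  have hge : ∑ i, dsort a i * dsort b i ≤ ∑ i, a i * b i := by
    have hsum : ∑ i, dsort a i * dsort b i
        = ∑ i, a ((σa * σb⁻¹ : Equiv.Perm (Fin n)) i) * b i := by
      rw [hda, hdb]
      rw [← Equiv.sum_comp σb (fun i => a ((σa * σb⁻¹ : Equiv.Perm (Fin n)) i) * b i)]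
      simp [Equiv.Perm.mul_apply]
    rw [hsum]
    have : ∑ i, G a i * ((fun i => a ((σa * σb⁻¹ : Equiv.Perm (Fin n)) i)) i - a i)
        = ∑ i, a i * b i - ∑ i, a ((σa * σb⁻¹ : Equiv.Perm (Fin n)) i) * b i := by
      rw [← Finset.sum_sub_distrib]
      apply Finset.sum_congr rfl
      intro i _
      simp [hb]
      ring
    linarith [h1, this ▸ h1]
  -- direction ≤ : rearrangement inequality
  have hle : ∑ i, a i * b i ≤ ∑ i, dsort a i * dsort b i := by
    have hmono : Monovary (dsort a) (dsort b) :=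
      (dsort_antitone a).monovary (dsort_antitone b)
    have h2 := hmono.sum_mul_comp_perm_le_sum_mul (σ := σb⁻¹ * σa)
    have hsum : ∑ i, a i * b i = ∑ i, dsort a i * dsort b ((σb⁻¹ * σa : Equiv.Perm (Fin n)) i) := by
      rw [hda, hdb]
      rw [← Equiv.sum_comp σa (fun i => a i * b i)]
      simp [Equiv.Perm.mul_apply]
    rw [hsum]
    exact h2
  have : ∑ i, a i * b i = ∑ i, dsort a i * dsort b i := le_antisymm hle hge
  simpa [hb] using this
end

section
/- In an abstract FTvN system (V, W, λ), if E ⊆ V is spectral (E = λ⁻¹(Q) for some Q ⊆ W), a ∈ E, and d belongs to the normal cone N_E(a), then ⟨a, d⟩ = ⟨λ(a), λ(d)⟩, i.e., a and d commute in the FTvN sense. -/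
/-! A spectral set contains, together with `a`, every `x` with `λ x = λ a`. So a normal vector `d`
at `a` makes `a` a maximiser of `⟨d, ·⟩` over this fibre, and by the FTvN maximum property that
maximum is `⟨λ d, λ a⟩`. -/

section FTvN

variable {V W : Type*} [NormedAddCommGroup V] [InnerProductSpace ℝ V]
  [NormedAddCommGroup W] [InnerProductSpace ℝ W]

theorem inner_eq_inner_of_isMaxOn_fiber (lam : V → W)
    (hmax : ∀ c u : V,
      IsGreatest {r : ℝ | ∃ x : V, lam x = lam u ∧ r = inner ℝ c x}
        (inner ℝ (lam c) (lam u)))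
    {a d : V} (ha : ∀ x, lam x = lam a → (inner ℝ d x : ℝ) ≤ inner ℝ d a) :
    (inner ℝ a d : ℝ) = inner ℝ (lam a) (lam d) := by
  obtain ⟨⟨x, hx, hxd⟩, hle⟩ := hmax d a
  have hda : (inner ℝ d a : ℝ) = inner ℝ (lam d) (lam a) :=
    le_antisymm (hle ⟨a, rfl, rfl⟩) (hxd ▸ ha x hx)
  rw [real_inner_comm, hda, real_inner_comm]

end FTvN

theorem stmt15_general {V W : Type*}
    [NormedAddCommGroup V] [InnerProductSpace ℝ V]
    [NormedAddCommGroup W] [InnerProductSpace ℝ W]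
    (lam : V → W)
    (hmax : ∀ c u : V,
      IsGreatest {r : ℝ | ∃ x : V, lam x = lam u ∧ r = inner ℝ c x}
        (inner ℝ (lam c) (lam u)))
    (Q : Set W) (E : Set V) (hEQ : E = lam ⁻¹' Q)
    (a : V) (ha : a ∈ E) (d : V)
    (hd : ∀ x ∈ E, (inner ℝ d (x - a) : ℝ) ≤ 0) :
    (inner ℝ a d : ℝ) = inner ℝ (lam a) (lam d) := by
  subst hEQ
  refine inner_eq_inner_of_isMaxOn_fiber lam hmax fun x hx => ?_
  have hxE : x ∈ lam ⁻¹' Q := by rwa [Set.mem_preimage, hx]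
  have := hd x hxE
  rw [inner_sub_right] at this
  linarith

theorem stmt15 {V W : Type*}
    [NormedAddCommGroup V] [InnerProductSpace ℝ V]
    [NormedAddCommGroup W] [InnerProductSpace ℝ W]
    (lam : V → W) (hnorm : ∀ x, ‖lam x‖ = ‖x‖)
    (hmax : ∀ c u : V,
      IsGreatest {r : ℝ | ∃ x : V, lam x = lam u ∧ r = inner ℝ c x}
        (inner ℝ (lam c) (lam u)))
    (Q : Set W) (E : Set V) (hEQ : E = lam ⁻¹' Q)
    (a : V) (ha : a ∈ E) (d : V)
    (hd : ∀ x ∈ E, (inner ℝ d (x - a) : ℝ) ≤ 0) :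
    (inner ℝ a d : ℝ) = inner ℝ (lam a) (lam d) :=
  stmt15_general lam hmax Q E hEQ a ha d hd
end

section
/- In an abstract FTvN system (V, W, λ), let E = λ⁻¹(Q) be a spectral set, Φ = φ∘λ a spectral function (φ : W → ℝ), and h : V → ℝ. If a maximizes h + Φ over E and d satisfies h(x) − h(a) ≥ ⟨d, x − a⟩ for all x ∈ E, then ⟨a, d⟩ = ⟨λ(a), λ(d)⟩. -/
/-! The maximum of `⟨d, ·⟩` over the fibre `λ⁻¹(λ a)` is `⟨λ d, λ a⟩` and is attained at some
`x`. This fibre lies in the spectral set `E`, and `Φ` is constant on it, so optimality of `a`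
gives `h x ≤ h a`; the subgradient inequality then yields `⟨d, x⟩ ≤ ⟨d, a⟩`, i.e.
`⟨λ d, λ a⟩ ≤ ⟨d, a⟩`. The reverse inequality is the FTvN bound itself. -/

lemma le_of_forall_add_comp_le {V W : Type*} {lam : V → W} {E : Set V} {φ : W → ℝ} {h : V → ℝ}
    {a x : V}
    (hopt : ∀ y ∈ E, h y + φ (lam y) ≤ h a + φ (lam a)) (hx : x ∈ E) (hxa : lam x = lam a) :
    h x ≤ h a := by
  have := hopt x hx
  rw [hxa] at this
  linarith

lemma inner_le_of_subgradient_of_le {V : Type*} [NormedAddCommGroup V] [InnerProductSpace ℝ V]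
    {E : Set V} {h : V → ℝ} {a d x : V}
    (hd : ∀ y ∈ E, h y - h a ≥ inner ℝ d (y - a)) (hx : x ∈ E) (hxa : h x ≤ h a) :
    inner ℝ d x ≤ inner ℝ d a := by
  have := hd x hx
  rw [inner_sub_right] at this
  linarith

theorem stmt16_general {V W : Type*}
    [NormedAddCommGroup V] [InnerProductSpace ℝ V]
    [NormedAddCommGroup W] [InnerProductSpace ℝ W]
    (lam : V → W)
    (hmax : ∀ c u : V,
      IsGreatest {r : ℝ | ∃ x : V, lam x = lam u ∧ r = inner ℝ c x}
        (inner ℝ (lam c) (lam u)))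
    (Q : Set W) (E : Set V) (hEQ : E = lam ⁻¹' Q)
    (φ : W → ℝ) (h : V → ℝ)
    (a : V) (ha : a ∈ E)
    (hopt : ∀ x ∈ E, h x + φ (lam x) ≤ h a + φ (lam a))
    (d : V)
    (hd : ∀ x ∈ E, h x - h a ≥ (inner ℝ d (x - a) : ℝ)) :
    (inner ℝ a d : ℝ) = inner ℝ (lam a) (lam d) := by
  obtain ⟨⟨x, hxa, hdx⟩, hbound⟩ := hmax d a
  have hxE : x ∈ E := by
    subst hEQ
    rwa [Set.mem_preimage, hxa]
  have hle : inner ℝ d a ≤ inner ℝ (lam d) (lam a) := hbound ⟨a, rfl, rfl⟩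
  have hge : inner ℝ (lam d) (lam a) ≤ inner ℝ d a :=
    hdx ▸ inner_le_of_subgradient_of_le hd hxE (le_of_forall_add_comp_le hopt hxE hxa)
  rw [real_inner_comm d, real_inner_comm (lam d)]
  exact le_antisymm hle hge

theorem stmt16 {V W : Type*}
    [NormedAddCommGroup V] [InnerProductSpace ℝ V]
    [NormedAddCommGroup W] [InnerProductSpace ℝ W]
    (lam : V → W) (hnorm : ∀ x, ‖lam x‖ = ‖x‖)
    (hmax : ∀ c u : V,
      IsGreatest {r : ℝ | ∃ x : V, lam x = lam u ∧ r = inner ℝ c x}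
        (inner ℝ (lam c) (lam u)))
    (Q : Set W) (E : Set V) (hEQ : E = lam ⁻¹' Q) (hE : E.Nonempty)
    (φ : W → ℝ) (h : V → ℝ)
    (a : V) (ha : a ∈ E)
    (hopt : ∀ x ∈ E, h x + φ (lam x) ≤ h a + φ (lam a))
    (d : V)
    (hd : ∀ x ∈ E, h x - h a ≥ (inner ℝ d (x - a) : ℝ)) :
    (inner ℝ a d : ℝ) = inner ℝ (lam a) (lam d) :=
  stmt16_general lam hmax Q E hEQ φ h a ha hopt d hd
end

section
/- Let Q ⊆ ℝⁿ be a permutation-invariant closed convex cone and K = {x ∈ ℝⁿ : x↓ ∈ Q}. If a ∈ K, b ∈ K* (the dual cone), and ⟨a, b⟩ = 0, then ⟨a↓, (−b)↓⟩ = 0, i.e., ⟨λ(a), λ̃(b)⟩ = 0 where λ̃(b) := −(−b)↓. -/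
open Finset

lemma dsort_comp_perm {n : ℕ} (v : Fin n → ℝ) (π : Equiv.Perm (Fin n)) :
    dsort (v ∘ π) = dsort v := by
  funext i
  have h : ((fun j => - v j) ∘ ⇑π) ∘ ⇑(Tuple.sort ((fun j => - v j) ∘ ⇑π))
      = (fun j => - v j) ∘ ⇑(Tuple.sort (fun j => - v j)) :=
    Tuple.comp_perm_comp_sort_eq_comp_sort
  have h2 : (fun j => - (v ∘ π) j) = (fun j => - v j) ∘ ⇑π := rfl
  simp only [dsort, h2, h]

theorem stmt18 {n : ℕ} (Q : Set (Fin n → ℝ)) (hQclosed : IsClosed Q)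
    (hQconv : Convex ℝ Q)
    (hQcone : ∀ x ∈ Q, ∀ t : ℝ, 0 ≤ t → t • x ∈ Q)
    (hQinv : ∀ x ∈ Q, ∀ σ : Equiv.Perm (Fin n), (fun i => x (σ i)) ∈ Q)
    (a b : Fin n → ℝ)
    (haK : dsort a ∈ Q)
    (hbK : ∀ x : Fin n → ℝ, dsort x ∈ Q → 0 ≤ ∑ i, b i * x i)
    (hcomp : ∑ i, a i * b i = 0) :
    ∑ i, dsort a i * dsort (fun j => - b j) i = 0 := by
  set σa := Tuple.sort (fun j => - a j) with hσa
  set τ := Tuple.sort b with hτ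
  have hda : ∀ i, dsort a i = a (σa i) := by intro i; simp [dsort, hσa]
  have hdb : ∀ i, dsort (fun j => - b j) i = - b (τ i) := by
    intro i; simp [dsort, hτ]
  -- the goal is  -∑ a(σa i) * b (τ i) = 0
  set S := ∑ i, a (σa i) * b (τ i) with hS
  have goal_eq : ∑ i, dsort a i * dsort (fun j => - b j) i = - S := by
    rw [hS, ← Finset.sum_neg_distrib]
    exact Finset.sum_congr rfl fun i _ => by rw [hda, hdb]; ring
  rw [goal_eq]
  -- Step A : 0 ≤ S
  have hge : 0 ≤ S := by
    set π : Equiv.Perm (Fin n) := τ.symm.trans σa with hπ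
    have hx : dsort (a ∘ π) ∈ Q := by rw [dsort_comp_perm]; exact haK
    have := hbK (a ∘ π) hx
    have hsum : ∑ i, b i * (a ∘ π) i = S := by
      rw [hS, ← Equiv.sum_comp τ (fun i => b i * (a ∘ π) i)]
      exact Finset.sum_congr rfl fun i _ => by
        simp [hπ, Equiv.symm_apply_apply, mul_comm]
    rwa [hsum] at this
  -- Step B : S ≤ 0
  have hle : S ≤ 0 := by
    have hmono_g : Monotone fun i => b (τ i) := Tuple.monotone_sort b
    have hanti_f : Antitone (dsort a) := by
      have := Tuple.monotone_sort (fun j => - a j)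
      intro i j hij
      have h2 := this hij
      simp only [Function.comp_apply] at h2
      rw [hda, hda]
      linarith
    have hAnti : Antivary (dsort a) (fun i => b (τ i)) := by
      intro i j hgij
      have hij : i < j := by
        by_contra h
        push_neg at h
        exact absurd (hmono_g h) (not_le_of_gt hgij)
      exact hanti_f hij.le
    have key := hAnti.sum_mul_le_sum_mul_comp_perm (σ := σa.trans τ.symm)
    have h1 : ∑ i, dsort a i * (fun i => b (τ i)) i = S := by
      exact Finset.sum_congr rfl fun i _ => by rw [hda]
    have h2 : ∑ i, dsort a i * (fun i => b (τ i)) ((σa.trans τ.symm) i) = 0 := by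
      rw [← hcomp, ← Equiv.sum_comp σa (fun i => a i * b i)]
      exact Finset.sum_congr rfl fun i _ => by
        simp [hda, Equiv.apply_symm_apply]
    rw [h1, h2] at key
    exact key
  linarith
end

section
/- Let E ⊆ ℝⁿ be permutation invariant, φ : ℝⁿ → ℝ permutation invariant, and c ∈ ℝⁿ. If a minimizes x ↦ ⟨c, x⟩ + φ(x) over E, then ⟨−c, a⟩ = ⟨(−c)↓, a↓⟩, and the minimum value equals ⟨λ̃(c), a↓⟩ + φ(a), where λ̃(c) := −(−c)↓ is the increasing rearrangement of c. -/
open Finset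

theorem stmt19 {n : ℕ} (E : Set (Fin n → ℝ)) (hE : E.Nonempty)
    (hinv : ∀ x ∈ E, ∀ σ : Equiv.Perm (Fin n), (fun i => x (σ i)) ∈ E)
    (φ : (Fin n → ℝ) → ℝ)
    (hφ : ∀ x, ∀ σ : Equiv.Perm (Fin n), φ (fun i => x (σ i)) = φ x)
    (c : Fin n → ℝ) (a : Fin n → ℝ) (ha : a ∈ E)
    (hmin : ∀ x ∈ E, (∑ i, c i * a i) + φ a ≤ (∑ i, c i * x i) + φ x) :
    (∑ i, (- c i) * a i = ∑ i, dsort (fun j => - c j) i * dsort a i) ∧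
    (∑ i, c i * a i) + φ a
      = (∑ i, (- dsort (fun j => - c j) i) * dsort a i) + φ a := by
  set σ := Tuple.sort (fun j => - - c j) with hσdef
  set τ := Tuple.sort (fun j => - a j) with hτdef
  have hdc : ∀ i, dsort (fun j => - c j) i = - c (σ i) := by
    intro i; simp [dsort, hσdef]
  have hda : ∀ i, dsort a i = a (τ i) := by
    intro i; simp [dsort, hτdef]
  have hmonc : Monotone ((fun j => - - c j) ∘ σ) := Tuple.monotone_sort _
  have hmona : Monotone ((fun j => - a j) ∘ τ) := Tuple.monotone_sort _
  have hantc : Antitone (dsort (fun j => - c j)) := by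
    intro i j hij
    rw [hdc, hdc]
    have := hmonc hij
    simp only [Function.comp_apply, neg_neg] at this
    linarith
  have hanta : Antitone (dsort a) := by
    intro i j hij
    rw [hda, hda]
    have := hmona hij
    simp only [Function.comp_apply] at this
    linarith
  have hmono : Monovary (dsort (fun j => - c j)) (dsort a) := hantc.monovary hanta
  -- upper bound
  have hub : (∑ i, (- c i) * a i) ≤ ∑ i, dsort (fun j => - c j) i * dsort a i := by
    have h1 : (∑ i, (- c i) * a i)
        = ∑ i, dsort (fun j => - c j) i * dsort a ((σ.trans τ.symm) i) := by
      rw [← Equiv.sum_comp σ (fun j => (- c j) * a j)]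
      refine Finset.sum_congr rfl fun i _ => ?_
      rw [hdc, hda]
      simp
    rw [h1]
    exact hmono.sum_mul_comp_perm_le_sum_mul
  -- lower bound from minimality
  have hlb : (∑ i, dsort (fun j => - c j) i * dsort a i) ≤ ∑ i, (- c i) * a i := by
    set ρ : Equiv.Perm (Fin n) := σ.symm.trans τ with hρ
    have hx : (fun i => a (ρ i)) ∈ E := hinv a ha ρ
    have hφx : φ (fun i => a (ρ i)) = φ a := hφ a ρ
    have h2 := hmin _ hx
    rw [hφx] at h2
    have h3 : (∑ i, c i * a i) ≤ ∑ i, c i * a (ρ i) := by linarith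
    have h4 : (∑ i, dsort (fun j => - c j) i * dsort a i)
        = ∑ i, (- c i) * a (ρ i) := by
      rw [← Equiv.sum_comp σ (fun j => (- c j) * a (ρ j))]
      refine Finset.sum_congr rfl fun i _ => ?_
      rw [hdc, hda, hρ]
      simp
    rw [h4]
    have h5 : ∑ i, (- c i) * a (ρ i) = - ∑ i, c i * a (ρ i) := by
      rw [← Finset.sum_neg_distrib]; simp
    have h6 : ∑ i, (- c i) * a i = - ∑ i, c i * a i := by
      rw [← Finset.sum_neg_distrib]; simp
    rw [h5, h6]; linarith
  have key : (∑ i, (- c i) * a i) = ∑ i, dsort (fun j => - c j) i * dsort a i :=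
    le_antisymm hub hlb
  refine ⟨key, ?_⟩
  have h7 : ∑ i, (- dsort (fun j => - c j) i) * dsort a i
      = - ∑ i, dsort (fun j => - c j) i * dsort a i := by
    rw [← Finset.sum_neg_distrib]; simp
  have h6 : ∑ i, (- c i) * a i = - ∑ i, c i * a i := by
    rw [← Finset.sum_neg_distrib]; simp
  rw [h7, ← key, h6, neg_neg]
end
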